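/- arXiv:2102.03173 — 2 statements merged into one kernel-verified Lean document; each statement's English description precedes it below -/
import Mathlib

section
/- Let a = (a_0, ..., a_{n-1}) be a nonnegative real sequence, and let each index k be independently retained with probability p = 1 - q. Let the retained entries, in order, form the sequence \(\tilde{a}_0, \tilde{a}_1, \ldots\) (padded with zeros). Then for any real w \geq 0, \(\mathbb{E}[\sum_{j \geq 0} \tilde{a}_j w^j] = p \sum_{k=0}^{n-1} a_k (pw + q)^k\). -/
/-!
Condition on the fate of `a₀`. If it is retained (probability `p`) it becomes `ã₀` and the
survivors of `a₁, …, a_{n-1}` are shifted one place, picking up a factor `w`; if it is deleted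
(probability `q`) they are not shifted. Hence the expected generating function `E(a)` satisfies
`E(a) = p a₀ + (p w + q) E(a₁, …, a_{n-1})`, which unrolls to `p ∑ₖ aₖ (p w + q)^k`.
-/

open Finset

lemma sum_fun_fin_succ {α M : Type*} [Fintype α] [AddCommMonoid M] {n : ℕ}
    (f : (Fin (n + 1) → α) → M) :
    ∑ m, f m = ∑ m : Fin n → α, ∑ b, f (Fin.cons b m) := by
  rw [← (Fin.consEquiv fun _ => α).sum_comp, Fintype.sum_prod_type, sum_comm]
  rfl

section DeletionChannel

variable {n : ℕ}

/-- The output of the deletion channel on `a` when `m` marks the retained entries. -/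
def survivors {α : Type*} (m : Fin n → Bool) (a : Fin n → α) : List α :=
  ((List.finRange n).filter (fun i => m i)).map a

lemma length_survivors_le {α : Type*} (m : Fin n → Bool) (a : Fin n → α) :
    (survivors m a).length ≤ n := by
  simpa [survivors] using List.length_filter_le (fun i => m i) (List.finRange n)

lemma survivors_cons {α : Type*} (b : Bool) (m : Fin n → Bool) (a : Fin (n + 1) → α) :
    survivors (Fin.cons b m : Fin (n + 1) → Bool) a =
      (if b then [a 0] else []) ++ survivors m (fun i => a i.succ) := by
  cases b <;> simp [survivors, List.finRange_succ, List.filter_map, Function.comp_def]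

variable {R : Type*} [CommRing R]

def retentionWeight (q : R) (m : Fin n → Bool) : R :=
  ∏ i, if m i then 1 - q else q

lemma retentionWeight_cons (q : R) (b : Bool) (m : Fin n → Bool) :
    retentionWeight q (Fin.cons b m : Fin (n + 1) → Bool) =
      (if b then 1 - q else q) * retentionWeight q m := by
  simp [retentionWeight, Fin.prod_univ_succ]

lemma sum_retentionWeight (q : R) : ∑ m : Fin n → Bool, retentionWeight q m = 1 := by
  simp only [retentionWeight]
  rw [← Fintype.prod_sum fun _ (b : Bool) => if b then 1 - q else q]
  simp

def truncEval (N : ℕ) (w : R) (l : List R) : R :=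
  ∑ j ∈ range N, l.getD j 0 * w ^ j

lemma truncEval_succ_cons (N : ℕ) (w x : R) (l : List R) :
    truncEval (N + 1) w (x :: l) = x + w * truncEval N w l := by
  simp [truncEval, sum_range_succ', pow_succ', mul_sum, mul_left_comm, add_comm]

lemma truncEval_succ_of_length_le {N : ℕ} (w : R) {l : List R} (hl : l.length ≤ N) :
    truncEval (N + 1) w l = truncEval N w l := by
  rw [truncEval, truncEval, sum_range_succ, List.getD_eq_default _ _ hl, zero_mul, add_zero]

lemma sum_bool_retentionWeight_cons_mul_truncEval (a : Fin (n + 1) → R) (q w : R)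
    (m : Fin n → Bool) :
    ∑ b, retentionWeight q (Fin.cons b m : Fin (n + 1) → Bool) *
        truncEval (n + 1) w (survivors (Fin.cons b m : Fin (n + 1) → Bool) a) =
      (1 - q) * a 0 * retentionWeight q m +
        ((1 - q) * w + q) * (retentionWeight q m * truncEval n w (survivors m fun i => a i.succ)) := by
  simp only [Fintype.sum_bool, survivors_cons, retentionWeight_cons, if_true, Bool.false_eq_true,
    if_false, List.singleton_append, List.nil_append, truncEval_succ_cons,
    truncEval_succ_of_length_le w (length_survivors_le m _)]
  ring

theorem sum_retentionWeight_mul_truncEval_survivors (a : Fin n → R) (q w : R) :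
    ∑ m, retentionWeight q m * truncEval n w (survivors m a) =
      (1 - q) * ∑ k : Fin n, a k * ((1 - q) * w + q) ^ (k : ℕ) := by
  induction n with
  | zero => simp [truncEval]
  | succ n ih =>
    rw [sum_fun_fin_succ]
    simp only [sum_bool_retentionWeight_cons_mul_truncEval]
    rw [sum_add_distrib, ← mul_sum, ← mul_sum, sum_retentionWeight, ih, Fin.sum_univ_succ]
    simp only [Fin.val_zero, pow_zero, Fin.val_succ, pow_succ, ← mul_assoc, ← sum_mul]
    ring

end DeletionChannel

theorem stmt_3_general (n : ℕ) (a : Fin n → ℝ) (q : ℝ)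
    (w : ℝ) :
    ∑ m : Fin n → Bool,
        (∏ i : Fin n, if m i then 1 - q else q) *
          (∑ j ∈ Finset.range n,
            (((List.finRange n).filter (fun i => m i)).map a).getD j 0 * w ^ j)
      = (1 - q) * ∑ k : Fin n, a k * ((1 - q) * w + q) ^ (k : ℕ) :=
  sum_retentionWeight_mul_truncEval_survivors a q w

/-- Let `a = (a_0, ..., a_{n-1})` be a nonnegative real sequence, each index
retained independently with probability `p = 1 - q`, and let `ã` be the subsequence of
retained entries (padded with zeros). Then for `w ≥ 0`,
`E[∑_j ã_j w^j] = p ∑_k a_k (p w + q)^k`. The expectation is written as an explicit sum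
over all retention patterns `m : Fin n → Bool` (`m i = true` means `a_i` retained, which
happens with probability `p = 1 - q`). -/
theorem stmt_3 (n : ℕ) (a : Fin n → ℝ) (ha : ∀ k, 0 ≤ a k) (q : ℝ)
    (hq0 : 0 ≤ q) (hq1 : q ≤ 1) (w : ℝ) (hw : 0 ≤ w) :
    ∑ m : Fin n → Bool,
        (∏ i : Fin n, if m i then 1 - q else q) *
          (∑ j ∈ Finset.range n,
            (((List.finRange n).filter (fun i => m i)).map a).getD j 0 * w ^ j)
      = (1 - q) * ∑ k : Fin n, a k * ((1 - q) * w + q) ^ (k : ℕ) :=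
  stmt_3_general n a q w
end

section
/- For every n > 3 and every m with 1 \leq m \leq n, the m-th order left-propagation trace sets of the path tree A_n (a root with a chain of n non-root nodes, each internal node having exactly one child) and the tree B_n (the path A_{n-1} with an extra sibling added to its single leaf) are equal; both equal the singleton set {A_{n-m}}. -/
/-- Unlabeled rooted ordered trees. -/
inductive UTree : Type
  | node (children : List UTree) : UTree

namespace UTree

/-- `spine k t` places a chain of `k` nodes above the tree `t`. -/
def spine : ℕ → UTree → UTree
  | 0, t => t
  | k + 1, t => .node [spine k t]

/-- `A n`: the path tree consisting of a root with a chain of `n` non-root nodes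
(each internal node has exactly one child). -/
def A (n : ℕ) : UTree := spine n (.node [])

/-- `B n`: the path tree `A (n-1)` with an extra sibling added to its single leaf,
i.e. a chain of `n - 2` non-root internal nodes whose last node has two leaf
children (`n` non-root nodes in total). -/
def B (n : ℕ) : UTree := spine (n - 2) (.node [.node [], .node []])

/-- One left-propagation deletion.  Deleting a node recursively replaces every node in
the left-only path starting at that node with its child in the path, deleting the last
node of the left-only path (a leftmost-descendant leaf) and leaving the remaining
structure unchanged.  For unlabeled trees this removes exactly one leaf that is the
leftmost descendant of the deleted node. -/
inductive LPStep : UTree → UTree → Prop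
  | del (l r : List UTree) : LPStep (.node (l ++ .node [] :: r)) (.node (l ++ r))
  | deeper (l r : List UTree) (t t' : UTree) :
      LPStep t t' → LPStep (.node (l ++ t :: r)) (.node (l ++ t' :: r))

/-- `LPk m T T'` : `T'` is in the `m`-th order left-propagation trace set `LP_m(T)`,
i.e. obtainable from `T` by deleting exactly `m` nodes under left-propagation. -/
def LPk : ℕ → UTree → UTree → Prop
  | 0 => fun t t' => t = t'
  | m + 1 => fun t t'' => ∃ t', LPStep t t' ∧ LPk m t' t''

end UTree

namespace UTree

lemma not_lpstep_leaf (t : UTree) : ¬ LPStep (.node []) t := by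
  intro h
  generalize hs : UTree.node ([] : List UTree) = s at h
  cases h with
  | del l r => injection hs with hs; simp at hs
  | deeper l r t0 t' h => injection hs with hs; simp at hs

lemma list_singleton_eq {α : Type} {l r : List α} {x a : α}
    (h : l ++ x :: r = [a]) : l = [] ∧ x = a ∧ r = [] := by
  cases l with
  | nil => simpa using h
  | cons b l' =>
    have := congrArg List.length h
    simp at this

lemma lpstep_singleton {x t : UTree} (h : LPStep (.node [x]) t) :
    (x = .node [] ∧ t = .node []) ∨ ∃ t', LPStep x t' ∧ t = .node [t'] := by
  generalize hs : UTree.node [x] = s at h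
  cases h with
  | del l r =>
    injection hs with hs
    obtain ⟨h1, h2, h3⟩ := list_singleton_eq hs.symm
    subst h1; subst h3
    exact Or.inl ⟨h2.symm, by simp⟩
  | deeper l r t0 t' h =>
    injection hs with hs
    obtain ⟨h1, h2, h3⟩ := list_singleton_eq hs.symm
    subst h1; subst h3; subst h2
    exact Or.inr ⟨t', h, by simp⟩

lemma lpstep_A_iff : ∀ n t, LPStep (A (n + 1)) t ↔ t = A n := by
  intro n
  induction n with
  | zero =>
    intro t
    constructor
    · intro h
      rcases lpstep_singleton h with ⟨_, ht⟩ | ⟨t', ht', _⟩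
      · exact ht
      · exact absurd ht' (not_lpstep_leaf t')
    · rintro rfl
      exact LPStep.del [] []
  | succ k ih =>
    intro t
    constructor
    · intro h
      rcases lpstep_singleton h with ⟨hx, _⟩ | ⟨t', ht', rfl⟩
      · exact absurd hx (by simp [A, spine])
      · rw [(ih t').mp ht']
        rfl
    · rintro rfl
      exact LPStep.deeper [] [] _ _ ((ih (A k)).mpr rfl)

lemma spine_add (m n : ℕ) (t : UTree) : spine m (spine n t) = spine (m + n) t := by
  induction m with
  | zero => simp [spine]
  | succ k ih => simp [spine, ih, Nat.succ_add]

lemma lpstep_dbl {t : UTree} (h : LPStep (.node [.node [], .node []]) t) :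
    t = .node [.node []] := by
  generalize hs : UTree.node [UTree.node [], UTree.node []] = s at h
  cases h with
  | del l r =>
    injection hs with hs
    match l, hs with
    | [], hs =>
      injection hs with _ h2
      subst h2
      rfl
    | [a], hs =>
      injection hs with h1 hs
      injection hs with _ h3
      subst h1; subst h3
      rfl
    | a :: b :: l2, hs =>
      injection hs with _ hs
      injection hs with _ hs
      simp at hs
  | deeper l r t0 t' h =>
    injection hs with hs
    match l, hs with
    | [], hs =>
      injection hs with h1 _
      subst h1
      exact absurd h (not_lpstep_leaf _)
    | [a], hs =>
      injection hs with _ hs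
      injection hs with h2 _
      subst h2
      exact absurd h (not_lpstep_leaf _)
    | a :: b :: l2, hs =>
      injection hs with _ hs
      injection hs with _ hs
      simp at hs

lemma lpstep_B_iff (k : ℕ) (t : UTree) :
    LPStep (spine k (.node [.node [], .node []])) t ↔ t = A (k + 1) := by
  induction k generalizing t with
  | zero =>
    constructor
    · intro h; exact lpstep_dbl h
    · rintro rfl; exact LPStep.del [] [.node []]
  | succ j ih =>
    constructor
    · intro h
      rcases lpstep_singleton h with ⟨hx, _⟩ | ⟨t', ht', rfl⟩
      · exfalso
        cases j with
        | zero => simp [spine] at hx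
        | succ j' => simp [spine] at hx
      · rw [(ih t').mp ht']; rfl
    · rintro rfl
      exact LPStep.deeper [] [] _ _ ((ih (A (j + 1))).mpr rfl)

lemma lpk_A_iff : ∀ m n, m ≤ n → ∀ t, (LPk m (A n) t ↔ t = A (n - m)) := by
  intro m
  induction m with
  | zero => intro n _ t; simp [LPk, eq_comm]
  | succ k ih =>
    intro n hn t
    obtain ⟨n', rfl⟩ : ∃ n', n = n' + 1 := ⟨n - 1, by omega⟩
    constructor
    · rintro ⟨t', h1, h2⟩
      rw [lpstep_A_iff] at h1
      subst h1
      have := (ih n' (by omega) t).mp h2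
      simpa using this
    · rintro rfl
      exact ⟨A n', (lpstep_A_iff n' _).mpr rfl,
        (ih n' (by omega) _).mpr (by simp)⟩

end UTree

/-- For every `n > 3` and every `1 ≤ m ≤ n`, the `m`-th order
left-propagation trace sets of `A n` and `B n` are equal, and both equal the singleton
`{A (n - m)}`. -/
theorem stmt_7 (n m : ℕ) (hn : 3 < n) (hm1 : 1 ≤ m) (hmn : m ≤ n) :
    (∀ t : UTree, UTree.LPk m (UTree.A n) t ↔ t = UTree.A (n - m)) ∧
    (∀ t : UTree, UTree.LPk m (UTree.B n) t ↔ t = UTree.A (n - m)) := by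
  open UTree in
  refine ⟨fun t => lpk_A_iff m n hmn t, fun t => ?_⟩
  obtain ⟨m', rfl⟩ : ∃ m', m = m' + 1 := ⟨m - 1, by omega⟩
  show (∃ t', UTree.LPStep (UTree.B n) t' ∧ UTree.LPk m' t' t) ↔ _
  have hB : ∀ t', UTree.LPStep (UTree.B n) t' ↔ t' = UTree.A (n - 1) := by
    intro t'
    have := UTree.lpstep_B_iff (n - 2) t'
    rw [show n - 2 + 1 = n - 1 by omega] at this
    exact this
  constructor
  · rintro ⟨t', h1, h2⟩
    rw [hB] at h1
    subst h1
    have := (UTree.lpk_A_iff m' (n - 1) (by omega) t).mp h2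
    rw [show n - 1 - m' = n - (m' + 1) by omega] at this
    exact this
  · rintro rfl
    refine ⟨UTree.A (n - 1), (hB _).mpr rfl, ?_⟩
    have := (UTree.lpk_A_iff m' (n - 1) (by omega) (UTree.A (n - 1 - m'))).mpr rfl
    rw [show n - 1 - m' = n - (m' + 1) by omega] at this
    exact this
end
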